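/- Each region of the graphical arrangement of a finite simple graph G in ℝ^V intersects the open unit hypercube (0,1)^V in a nonempty connected set, and distinct regions have disjoint such intersections; consequently the number of regions of the graphical arrangement equals the number of bounded regions of the arrangement A(G;3) obtained by adding the hyperplanes z_v = 0 and z_v = 1 for all v ∈ V. -/

import Mathlib

open SimpleGraph Polynomial

/-- The complement in `ℝ^V` of the graphical arrangement of `G` (hyperplanes
`z_u = z_w` over edges `{u,w}`). -/
def graphicalComplement {V : Type*} (G : SimpleGraph V) : Set (V → ℝ) :=
  {z | ∀ u w, G.Adj u w → z u ≠ z w}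

/-- The complement in `ℝ^V` of the arrangement `A(G;m)`, consisting of the hyperplanes
`z_u = z_w` for edges `{u,w}` of `G` and `z_v = i` for `v ∈ V`, `i ∈ {0,…,m-2}`. -/
def arrComplement {V : Type*} (G : SimpleGraph V) (m : ℕ) : Set (V → ℝ) :=
  {z | (∀ u w, G.Adj u w → z u ≠ z w) ∧ ∀ v : V, ∀ i : ℕ, i ≤ m - 2 → z v ≠ (i : ℝ)}

/-!
A region of the graphical arrangement is cut out by the strict inequalities `z u < z w` it
satisfies on the edges, so it is convex, and so is its intersection with the open cube; that
intersection is nonempty because applying the sigmoid to every coordinate preserves all these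
inequalities. Inside the cube the extra hyperplanes `z_v = 0, 1` of `A(G;3)` are never crossed,
so the regions of `A(G;3)` meeting the cube are exactly the traces of the graphical regions.
Every other region of `A(G;3)` is unbounded: moving each coordinate outside `[0,1]` away from
`[0,1]` at a speed proportional to its distance from it preserves the order of the coordinates
and never crosses `0` or `1`.
-/

open Set Bornology

section SignConstancy

variable {X α : Type*} [TopologicalSpace X] [LinearOrder α] [TopologicalSpace α]
  [OrderClosedTopology α] {s : Set X} {f : X → α} {a : α} {x z : X}

theorem IsPreconnected.apply_lt_of_forall_ne (hs : IsPreconnected s) (hf : ContinuousOn f s)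
    (hne : ∀ y ∈ s, f y ≠ a) (hx : x ∈ s) (hz : z ∈ s) (hxa : f x < a) : f z < a := by
  by_contra! hza
  obtain ⟨y, hy, rfl⟩ := hs.intermediate_value hx hz hf ⟨hxa.le, hza⟩
  exact hne y hy rfl

theorem IsPreconnected.lt_apply_of_forall_ne (hs : IsPreconnected s) (hf : ContinuousOn f s)
    (hne : ∀ y ∈ s, f y ≠ a) (hx : x ∈ s) (hz : z ∈ s) (hxa : a < f x) : a < f z := by
  by_contra! hza
  obtain ⟨y, hy, rfl⟩ := hs.intermediate_value hz hx hf ⟨hza, hxa.le⟩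
  exact hne y hy rfl

end SignConstancy

theorem disjoint_connectedComponentIn {X : Type*} [TopologicalSpace X] {T : Set X} {x y : X}
    (h : connectedComponentIn T x ≠ connectedComponentIn T y) :
    Disjoint (connectedComponentIn T x) (connectedComponentIn T y) :=
  Set.disjoint_left.2 fun _ hx hy =>
    h ((connectedComponentIn_eq hx).trans (connectedComponentIn_eq hy).symm)

def componentsIn {X : Type*} [TopologicalSpace X] (T : Set X) : Set (Set X) :=
  {C | ∃ x ∈ T, C = connectedComponentIn T x}

theorem not_isBounded_of_forall_add_smul_mem {E : Type*} [NormedAddCommGroup E]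
    [NormedSpace ℝ E] {S : Set E} {x d : E} (hd : d ≠ 0) (hmem : ∀ t : ℝ, 0 ≤ t → x + t • d ∈ S) :
    ¬IsBounded S := by
  intro hS
  obtain ⟨C, hC⟩ := isBounded_iff_forall_norm_le.1 hS
  have hd' : 0 < ‖d‖ := norm_pos_iff.2 hd
  have hC0 : 0 ≤ C := (norm_nonneg _).trans (hC _ (hmem 0 le_rfl))
  set t := (C + ‖x‖ + 1) / ‖d‖
  have ht : 0 ≤ t := by positivity
  have htd : t * ‖d‖ = C + ‖x‖ + 1 := div_mul_cancel₀ _ hd'.ne'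
  have : t * ‖d‖ ≤ C + ‖x‖ :=
    calc t * ‖d‖ = ‖(x + t • d) - x‖ := by
          rw [add_sub_cancel_left, norm_smul, Real.norm_of_nonneg ht]
      _ ≤ ‖x + t • d‖ + ‖x‖ := norm_sub_le _ _
      _ ≤ C + ‖x‖ := by gcongr; exact hC _ (hmem t ht)
  linarith

section Regions

variable {V : Type*} (G : SimpleGraph V)

def orientedRegion (x : V → ℝ) : Set (V → ℝ) :=
  {z | ∀ u w, G.Adj u w → x u < x w → z u < z w}

theorem mem_orientedRegion_self (x : V → ℝ) : x ∈ orientedRegion G x :=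
  fun _ _ _ h => h

theorem comp_mem_orientedRegion {φ : ℝ → ℝ} (hφ : StrictMono φ) (x : V → ℝ) :
    φ ∘ x ∈ orientedRegion G x :=
  fun _ _ _ h => hφ h

theorem convex_orientedRegion (x : V → ℝ) : Convex ℝ (orientedRegion G x) := by
  refine convex_iff_forall_pos.2 fun y hy z hz a b ha hb _ u w huw hx => ?_
  simp only [Pi.add_apply, Pi.smul_apply, smul_eq_mul]
  exact add_lt_add (mul_lt_mul_of_pos_left (hy u w huw hx) ha)
    (mul_lt_mul_of_pos_left (hz u w huw hx) hb)

variable {G} in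
theorem orientedRegion_subset_graphicalComplement {x : V → ℝ}
    (hx : x ∈ graphicalComplement G) : orientedRegion G x ⊆ graphicalComplement G := by
  intro z hz u w huw
  rcases (hx u w huw).lt_or_gt with h | h
  · exact (hz u w huw h).ne
  · exact (hz w u huw.symm h).ne'

variable {G} in
theorem connectedComponentIn_subset_orientedRegion {T : Set (V → ℝ)}
    (hT : T ⊆ graphicalComplement G) (x : V → ℝ) :
    connectedComponentIn T x ⊆ orientedRegion G x := by
  intro z hz u w huw hx
  have hxT : x ∈ T := connectedComponentIn_nonempty_iff.1 ⟨z, hz⟩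
  refine sub_neg.1 (isPreconnected_connectedComponentIn.apply_lt_of_forall_ne
    (f := fun y : V → ℝ => y u - y w) (by fun_prop) (fun y hy => ?_)
    (mem_connectedComponentIn hxT) hz (sub_neg.2 hx))
  exact sub_ne_zero.2 (hT (connectedComponentIn_subset T x hy) u w huw)

variable {G} in
theorem connectedComponentIn_graphicalComplement {x : V → ℝ}
    (hx : x ∈ graphicalComplement G) :
    connectedComponentIn (graphicalComplement G) x = orientedRegion G x :=
  (connectedComponentIn_subset_orientedRegion subset_rfl x).antisymm
    ((convex_orientedRegion G x).isPreconnected.subset_connectedComponentIn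
      (mem_orientedRegion_self G x) (orientedRegion_subset_graphicalComplement hx))

end Regions

section UnitCube

variable {V : Type*} {G : SimpleGraph V}

def openUnitCube (V : Type*) : Set (V → ℝ) := {z | ∀ v, 0 < z v ∧ z v < 1}

theorem convex_openUnitCube : Convex ℝ (openUnitCube V) := by
  have : openUnitCube V = univ.pi fun _ => Ioo 0 1 := by
    ext z
    simp [openUnitCube]
  rw [this]
  exact convex_pi fun _ _ => convex_Ioo 0 1

theorem isBounded_openUnitCube [Fintype V] : IsBounded (openUnitCube V) :=
  (Metric.isBounded_Icc (0 : V → ℝ) 1).subset fun _ hz =>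
    ⟨fun v => (hz v).1.le, fun v => (hz v).2.le⟩

theorem sigmoid_comp_mem_openUnitCube (x : V → ℝ) : Real.sigmoid ∘ x ∈ openUnitCube V :=
  fun v => ⟨Real.sigmoid_pos (x v), Real.sigmoid_lt_one (x v)⟩

theorem sigmoid_comp_mem_connectedComponentIn_inter {x : V → ℝ}
    (hx : x ∈ graphicalComplement G) :
    Real.sigmoid ∘ x ∈ connectedComponentIn (graphicalComplement G) x ∩ openUnitCube V := by
  rw [connectedComponentIn_graphicalComplement hx]
  exact ⟨comp_mem_orientedRegion G Real.sigmoid_strictMono x, sigmoid_comp_mem_openUnitCube x⟩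

theorem isConnected_connectedComponentIn_inter_openUnitCube {x : V → ℝ}
    (hx : x ∈ graphicalComplement G) :
    IsConnected (connectedComponentIn (graphicalComplement G) x ∩ openUnitCube V) := by
  refine Convex.isConnected ?_ ⟨_, sigmoid_comp_mem_connectedComponentIn_inter hx⟩
  rw [connectedComponentIn_graphicalComplement hx]
  exact (convex_orientedRegion G x).inter convex_openUnitCube

end UnitCube

section ArrangementThree

variable {V : Type*} {G : SimpleGraph V}

theorem mem_arrComplement_three {z : V → ℝ} :
    z ∈ arrComplement G 3 ↔ z ∈ graphicalComplement G ∧ ∀ v, z v ≠ 0 ∧ z v ≠ 1 := by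
  refine and_congr_right fun _ => ⟨fun h v => ⟨?_, ?_⟩, fun h v i hi => ?_⟩
  · simpa using h v 0 (by norm_num)
  · simpa using h v 1 (by norm_num)
  · interval_cases i
    · simpa using (h v).1
    · simpa using (h v).2

theorem arrComplement_three_subset_graphicalComplement :
    arrComplement G 3 ⊆ graphicalComplement G :=
  fun _ hz => (mem_arrComplement_three.1 hz).1

theorem graphicalComplement_inter_openUnitCube_subset :
    graphicalComplement G ∩ openUnitCube V ⊆ arrComplement G 3 :=
  fun _ ⟨hz, hc⟩ => mem_arrComplement_three.2 ⟨hz, fun v => ⟨(hc v).1.ne', (hc v).2.ne⟩⟩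

theorem connectedComponentIn_arrComplement_three_subset_openUnitCube {y : V → ℝ}
    (hy : y ∈ openUnitCube V) : connectedComponentIn (arrComplement G 3) y ⊆ openUnitCube V := by
  intro z hz v
  have hyA : y ∈ arrComplement G 3 := connectedComponentIn_nonempty_iff.1 ⟨z, hz⟩
  have hK := isPreconnected_connectedComponentIn (F := arrComplement G 3) (x := y)
  have hcoord : ContinuousOn (fun z : V → ℝ => z v) (connectedComponentIn (arrComplement G 3) y) :=
    (continuous_apply v).continuousOn
  have hne : ∀ w ∈ connectedComponentIn (arrComplement G 3) y, w v ≠ 0 ∧ w v ≠ 1 := fun w hw =>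
    (mem_arrComplement_three.1 (connectedComponentIn_subset _ _ hw)).2 v
  exact ⟨hK.lt_apply_of_forall_ne hcoord (fun w hw => (hne w hw).1)
      (mem_connectedComponentIn hyA) hz (hy v).1,
    hK.apply_lt_of_forall_ne hcoord (fun w hw => (hne w hw).2)
      (mem_connectedComponentIn hyA) hz (hy v).2⟩

theorem connectedComponentIn_inter_openUnitCube_eq {x y : V → ℝ}
    (hx : x ∈ graphicalComplement G)
    (hy : y ∈ connectedComponentIn (graphicalComplement G) x ∩ openUnitCube V) :
    connectedComponentIn (graphicalComplement G) x ∩ openUnitCube V =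
      connectedComponentIn (arrComplement G 3) y := by
  have hsub : connectedComponentIn (graphicalComplement G) x ∩ openUnitCube V ⊆
      arrComplement G 3 :=
    (inter_subset_inter_left _ (connectedComponentIn_subset _ _)).trans
      graphicalComplement_inter_openUnitCube_subset
  refine (isConnected_connectedComponentIn_inter_openUnitCube hx).isPreconnected
    |>.subset_connectedComponentIn hy hsub |>.antisymm fun z hz => ⟨?_, ?_⟩
  · rw [connectedComponentIn_eq hy.1]
    exact connectedComponentIn_mono y arrComplement_three_subset_graphicalComplement hz
  · exact connectedComponentIn_arrComplement_three_subset_openUnitCube hy.2 hz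

/-- `s` minus its nearest point of `[0,1]`. -/
def unitExcess (s : ℝ) : ℝ := min s 0 + max (s - 1) 0

theorem monotone_unitExcess : Monotone unitExcess := fun _ _ h =>
  add_le_add (min_le_min_right 0 h) (max_le_max_right 0 (sub_le_sub_right h 1))

theorem unitExcess_ne_zero {s : ℝ} (hs : s < 0 ∨ 1 < s) : unitExcess s ≠ 0 := by
  rcases hs with hs | hs
  · rw [unitExcess, min_eq_left hs.le, max_eq_right (by linarith)]
    linarith
  · rw [unitExcess, min_eq_right (by linarith), max_eq_left (by linarith)]
    linarith

theorem comp_mem_arrComplement_three {φ : ℝ → ℝ} (hφ : StrictMono φ) (h0 : φ 0 = 0)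
    (h1 : φ 1 = 1) {z : V → ℝ} (hz : z ∈ arrComplement G 3) : φ ∘ z ∈ arrComplement G 3 := by
  obtain ⟨hzG, hz01⟩ := mem_arrComplement_three.1 hz
  refine mem_arrComplement_three.2 ⟨orientedRegion_subset_graphicalComplement hzG
    (comp_mem_orientedRegion G hφ z), fun v => ⟨?_, ?_⟩⟩
  · rw [← h0]
    exact hφ.injective.ne (hz01 v).1
  · rw [← h1]
    exact hφ.injective.ne (hz01 v).2

theorem add_smul_unitExcess_mem_arrComplement_three {x : V → ℝ} (hx : x ∈ arrComplement G 3)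
    {t : ℝ} (ht : 0 ≤ t) : x + t • (unitExcess ∘ x) ∈ arrComplement G 3 :=
  comp_mem_arrComplement_three (φ := fun s => s + t * unitExcess s)
    (strictMono_id.add_monotone (monotone_unitExcess.const_mul ht))
    (by simp [unitExcess]) (by simp [unitExcess]) hx

theorem mem_openUnitCube_of_isBounded [Fintype V] {x : V → ℝ} (hx : x ∈ arrComplement G 3)
    (hb : IsBounded (connectedComponentIn (arrComplement G 3) x)) : x ∈ openUnitCube V := by
  by_contra hxc
  obtain ⟨v, hv⟩ : ∃ v, ¬(0 < x v ∧ x v < 1) := by simpa [openUnitCube] using hxc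
  have hout : x v < 0 ∨ 1 < x v := by
    obtain ⟨h0, h1⟩ := (mem_arrComplement_three.1 hx).2 v
    by_contra! h
    exact hv ⟨h.1.lt_of_ne' h0, h.2.lt_of_ne h1⟩
  have hd : unitExcess ∘ x ≠ 0 := fun h => unitExcess_ne_zero hout (congrFun h v)
  have hray : (fun t : ℝ => x + t • (unitExcess ∘ x)) '' Ici 0 ⊆
      connectedComponentIn (arrComplement G 3) x :=
    (isPreconnected_Ici.image _ (by fun_prop)).subset_connectedComponentIn
      ⟨0, mem_Ici.2 le_rfl, by simp⟩
      (image_subset_iff.2 fun _ ht => add_smul_unitExcess_mem_arrComplement_three hx ht)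
  exact not_isBounded_of_forall_add_smul_mem hd (fun t ht => hray ⟨t, ht, rfl⟩) hb

end ArrangementThree

theorem bijOn_inter_openUnitCube {V : Type*} [Fintype V] (G : SimpleGraph V) :
    BijOn (· ∩ openUnitCube V) (componentsIn (graphicalComplement G))
      {C ∈ componentsIn (arrComplement G 3) | IsBounded C} := by
  refine ⟨?_, ?_, ?_⟩
  · rintro _ ⟨x, hx, rfl⟩
    have hy := sigmoid_comp_mem_connectedComponentIn_inter hx
    exact ⟨⟨_, graphicalComplement_inter_openUnitCube_subset
        ⟨connectedComponentIn_subset _ _ hy.1, hy.2⟩,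
        connectedComponentIn_inter_openUnitCube_eq hx hy⟩,
      isBounded_openUnitCube.subset inter_subset_right⟩
  · rintro _ ⟨x₁, hx₁, rfl⟩ _ ⟨x₂, -, rfl⟩ h
    have hy := sigmoid_comp_mem_connectedComponentIn_inter hx₁
    have hy₂ := (show _ ∩ openUnitCube V = _ ∩ openUnitCube V from h) ▸ hy
    exact (connectedComponentIn_eq hy.1).trans (connectedComponentIn_eq hy₂.1).symm
  · rintro _ ⟨⟨y, hy, rfl⟩, hb⟩
    have hyG := arrComplement_three_subset_graphicalComplement hy
    exact ⟨_, ⟨y, hyG, rfl⟩, connectedComponentIn_inter_openUnitCube_eq hyG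
      ⟨mem_connectedComponentIn hyG, mem_openUnitCube_of_isBounded hy hb⟩⟩

theorem regions_meet_unit_cube {V : Type*} [Fintype V] (G : SimpleGraph V) :
    (∀ C : Set (V → ℝ),
        (∃ x ∈ graphicalComplement G, C = connectedComponentIn (graphicalComplement G) x) →
        (C ∩ {z | ∀ v, 0 < z v ∧ z v < 1}).Nonempty ∧
          IsConnected (C ∩ {z | ∀ v, 0 < z v ∧ z v < 1})) ∧
    (∀ C₁ C₂ : Set (V → ℝ),
        (∃ x ∈ graphicalComplement G, C₁ = connectedComponentIn (graphicalComplement G) x) →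
        (∃ x ∈ graphicalComplement G, C₂ = connectedComponentIn (graphicalComplement G) x) →
        C₁ ≠ C₂ →
        Disjoint (C₁ ∩ {z | ∀ v, 0 < z v ∧ z v < 1}) (C₂ ∩ {z | ∀ v, 0 < z v ∧ z v < 1})) ∧
    Nat.card {C : Set (V → ℝ) //
        ∃ x ∈ graphicalComplement G, C = connectedComponentIn (graphicalComplement G) x} =
      Nat.card {C : Set (V → ℝ) //
        (∃ x ∈ arrComplement G 3, C = connectedComponentIn (arrComplement G 3) x) ∧
        Bornology.IsBounded C} := by
  refine ⟨?_, ?_, Nat.card_congr ((bijOn_inter_openUnitCube G).equiv _)⟩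
  · rintro C ⟨x, hx, rfl⟩
    exact ⟨⟨_, sigmoid_comp_mem_connectedComponentIn_inter hx⟩,
      isConnected_connectedComponentIn_inter_openUnitCube hx⟩
  · rintro C₁ C₂ ⟨x₁, -, rfl⟩ ⟨x₂, -, rfl⟩ hne
    exact (disjoint_connectedComponentIn hne).mono inter_subset_left inter_subset_left
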